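/- Let S_n be the star tree on n ≥ 3 vertices. Then the trace of Max4PC_{S_n} equals 2(n−1)², i.e., the sum of the two nonzero eigenvalues of Max4PC_{S_n} is 2(n−1)², and the product of the two nonzero eigenvalues equals −(n−1)·binom(n−1,2). -/
import Mathlib


open SimpleGraph

variable {V : Type*}

/-- The maximum of the three four-point sums for vertices `w, x, y, z`:
`max (d w x + d y z) (max (d w y + d x z) (d w z + d x y))`.
This is the entry of the matrix `Max4PC` in row `{w,x}` and column `{y,z}`. -/
noncomputable def max4 (G : SimpleGraph V) (w x y z : V) : ℕ :=
  max (G.dist w x + G.dist y z) (max (G.dist w y + G.dist x z) (G.dist w z + G.dist x y))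

/-- The `Max4PC` entry as a symmetric function of two unordered pairs. -/
noncomputable def max4Sym2 (G : SimpleGraph V) : Sym2 V → Sym2 V → ℕ :=
  Sym2.lift₂ ⟨fun w x y z => max4 G w x y z, by
    intro a₁ a₂ b₁ b₂
    simp only [max4]
    constructor
    · rw [show G.dist a₂ a₁ = G.dist a₁ a₂ from G.dist_comm]
      omega
    · rw [show G.dist b₂ b₁ = G.dist b₁ b₂ from G.dist_comm]
      omega⟩

/-- The matrix `Max4PC_T` as a real matrix, with rows and columns indexed
by the 2-element subsets of the vertex set (non-diagonal elements of `Sym2 V`). -/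
noncomputable def max4MatrixR [Fintype V] [DecidableEq V] (G : SimpleGraph V) :
    Matrix {s : Sym2 V // ¬ s.IsDiag} {s : Sym2 V // ¬ s.IsDiag} ℝ :=
  fun p q => (max4Sym2 G p.1 q.1 : ℝ)

open Polynomial Matrix Finset

lemma aux_eval_charpoly {n : Type*} [Fintype n] [DecidableEq n] (M : Matrix n n ℝ) (t : ℝ) :
    Polynomial.eval t M.charpoly = (t • (1 : Matrix n n ℝ) - M).det := by
  rw [Matrix.charpoly, ← coe_evalRingHom, RingHom.map_det]
  congr 1
  ext i j
  by_cases h : i = j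
  · subst h; simp [charmatrix_apply_eq, Matrix.one_apply]
  · simp [charmatrix_apply_ne _ _ _ h, Matrix.one_apply, h]

lemma aux_det_rank_two {ι : Type*} [Fintype ι] [DecidableEq ι] (u : ι → ℝ)
    (hcard : 2 ≤ Fintype.card ι) (t : ℝ) (ht : t ≠ 0) :
    (t • (1 : Matrix ι ι ℝ) - Matrix.of fun p q => u p + u q).det
      = t ^ (Fintype.card ι - 2) *
        (t ^ 2 - 2 * (∑ p, u p) * t +
          ((∑ p, u p) ^ 2 - (Fintype.card ι : ℝ) * ∑ p, (u p) ^ 2)) := by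
  classical
  set A : Matrix ι (Fin 2) ℝ := Matrix.of fun p j => if j = 0 then u p else 1 with hA
  set B : Matrix (Fin 2) ι ℝ := Matrix.of fun j q => if j = 0 then -t⁻¹ else -t⁻¹ * u q with hB
  have hAB : A * B = Matrix.of fun p q => -(t⁻¹ * (u p + u q)) := by
    ext p q
    simp [hA, hB, Matrix.mul_apply, Fin.sum_univ_two]
    ring
  have hM : t • (1 : Matrix ι ι ℝ) - Matrix.of (fun p q => u p + u q)
      = t • ((1 : Matrix ι ι ℝ) + A * B) := by
    rw [hAB]
    ext p q
    simp only [Matrix.sub_apply, Matrix.smul_apply, Matrix.add_apply, Matrix.of_apply,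
      smul_eq_mul, mul_add, mul_neg, ← mul_assoc, mul_inv_cancel₀ ht, one_mul]
    ring
  rw [hM, Matrix.det_smul, Matrix.det_one_add_mul_comm]
  have hBA : (1 : Matrix (Fin 2) (Fin 2) ℝ) + B * A
      = Matrix.of ![![1 + ∑ q, -t⁻¹ * u q, ∑ _q : ι, -t⁻¹],
                    ![∑ q, -t⁻¹ * u q * u q, 1 + ∑ q, -t⁻¹ * u q]] := by
    ext j k
    fin_cases j <;> fin_cases k <;>
      simp [hA, hB, Matrix.mul_apply, Matrix.one_apply]
  rw [hBA, Matrix.det_fin_two]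
  have e1 : ∑ q, -t⁻¹ * u q = -t⁻¹ * ∑ q, u q := by rw [Finset.mul_sum]
  have e2 : ∑ _q : ι, (-t⁻¹ : ℝ) = -t⁻¹ * (Fintype.card ι : ℝ) := by
    rw [Finset.sum_const, Finset.card_univ, nsmul_eq_mul]; ring
  have e3 : ∑ q, -t⁻¹ * u q * u q = -t⁻¹ * ∑ q, (u q) ^ 2 := by
    rw [Finset.mul_sum]; exact Finset.sum_congr rfl fun q _ => by ring
  simp only [Matrix.of_apply, Matrix.cons_val', Matrix.cons_val_zero, Matrix.cons_val_one,
    Matrix.head_cons, Matrix.empty_val', Matrix.cons_val_fin_one, Matrix.head_fin_const,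
    e1, e2, e3]
  have hpow : t ^ Fintype.card ι = t ^ (Fintype.card ι - 2) * t ^ 2 := by
    rw [← pow_add]; congr 1; omega
  rw [hpow]
  field_simp
  ring

lemma star_dist [DecidableEq V] (G : SimpleGraph V) (c : V)
    (hstar : ∀ x y : V, G.Adj x y ↔ x ≠ y ∧ (x = c ∨ y = c)) (x y : V) :
    G.dist x y = if x = y then 0 else if x = c ∨ y = c then 1 else 2 := by
  split_ifs with h1 h2
  · subst h1; simp
  · exact SimpleGraph.dist_eq_one_iff_adj.2 ((hstar x y).2 ⟨h1, h2⟩)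
  · push_neg at h2
    obtain ⟨hxc, hyc⟩ := h2
    have hadj1 : G.Adj x c := (hstar x c).2 ⟨hxc, Or.inr rfl⟩
    have hadj2 : G.Adj c y := (hstar c y).2 ⟨fun h => hyc h.symm, Or.inl rfl⟩
    have hle : G.dist x y ≤ 2 := by
      simpa using SimpleGraph.dist_le (Walk.cons hadj1 (Walk.cons hadj2 Walk.nil))
    have hne0 : G.dist x y ≠ 0 := by
      intro h
      rcases SimpleGraph.dist_eq_zero_iff_eq_or_not_reachable.1 h with h' | h'
      · exact h1 h'
      · exact h' ⟨Walk.cons hadj1 (Walk.cons hadj2 Walk.nil)⟩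
    have hne1 : G.dist x y ≠ 1 := by
      intro h
      have := SimpleGraph.dist_eq_one_iff_adj.1 h
      rcases ((hstar x y).1 this).2 with h' | h' <;> simp_all
    omega

set_option maxHeartbeats 3000000 in
lemma star_max4 [DecidableEq V] (G : SimpleGraph V) (c : V)
    (hstar : ∀ x y : V, G.Adj x y ↔ x ≠ y ∧ (x = c ∨ y = c)) (w x y z : V)
    (hwx : w ≠ x) (hyz : y ≠ z) :
    max4 G w x y z = (if w = c ∨ x = c then 1 else 2) + (if y = c ∨ z = c then 1 else 2) := by
  simp only [max4, star_dist G c hstar, if_neg hwx, if_neg hyz]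
  rcases eq_or_ne w c with hw | hw <;> rcases eq_or_ne x c with hx | hx <;>
    rcases eq_or_ne y c with hy | hy <;> rcases eq_or_ne z c with hz | hz <;>
    subst_vars <;> simp_all <;> split_ifs <;> omega

/-- For the star tree on `n ≥ 3` vertices, the trace of `Max4PC` equals `2(n-1)²`;
moreover the two nonzero eigenvalues `λ, μ` (the nonzero roots of the
characteristic polynomial, with multiplicity) satisfy `λ + μ = 2(n-1)²` and
`λ·μ = -(n-1)·C(n-1,2)`. -/

theorem trace_max4Matrix_star {V : Type*} [Fintype V] [DecidableEq V]
    (G : SimpleGraph V) (c : V)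
    (hstar : ∀ x y : V, G.Adj x y ↔ x ≠ y ∧ (x = c ∨ y = c))
    (hn : 3 ≤ Fintype.card V) :
    (max4MatrixR G).trace = 2 * ((Fintype.card V : ℝ) - 1) ^ 2 ∧
    ∃ lam mu : ℝ,
      ((max4MatrixR G).charpoly.roots.filter fun x => x ≠ 0) = {lam, mu} ∧
      lam + mu = 2 * ((Fintype.card V : ℝ) - 1) ^ 2 ∧
      lam * mu = -(((Fintype.card V : ℝ) - 1) *
        (Nat.choose (Fintype.card V - 1) 2 : ℝ)) := by
  classical
  set n := Fintype.card V with hn_def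
  set r : ℝ := (n : ℝ) with hr_def
  have hr3 : (3 : ℝ) ≤ r := by show (3:ℝ) ≤ (n:ℝ); exact_mod_cast hn
  set ι := {s : Sym2 V // ¬ s.IsDiag} with hι_def
  set u : ι → ℝ := fun p => if c ∈ (p.1 : Sym2 V) then 1 else 2 with hu_def
  -- matrix identification
  have hMat : max4MatrixR G = Matrix.of fun p q => u p + u q := by
    ext p q
    obtain ⟨p, hp⟩ := p
    obtain ⟨q, hq⟩ := q
    revert hp hq
    induction p, q using Sym2.inductionOn₂ with
    | _ w x y z =>
      intro hp hq
      have hwx : w ≠ x := by simpa [Sym2.mk_isDiag_iff] using hp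
      have hyz : y ≠ z := by simpa [Sym2.mk_isDiag_iff] using hq
      have heq : max4Sym2 G s(w, x) s(y, z) = max4 G w x y z := rfl
      simp only [max4MatrixR, Matrix.of_apply, heq, star_max4 G c hstar w x y z hwx hyz,
        hu_def]
      have h1 : (c ∈ s(w, x)) ↔ (w = c ∨ x = c) := by
        rw [Sym2.mem_iff]
        exact ⟨fun h => h.elim (fun h => Or.inl h.symm) (fun h => Or.inr h.symm),
               fun h => h.elim (fun h => Or.inl h.symm) (fun h => Or.inr h.symm)⟩
      have h2 : (c ∈ s(y, z)) ↔ (y = c ∨ z = c) := by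
        rw [Sym2.mem_iff]
        exact ⟨fun h => h.elim (fun h => Or.inl h.symm) (fun h => Or.inr h.symm),
               fun h => h.elim (fun h => Or.inl h.symm) (fun h => Or.inr h.symm)⟩
      push_cast
      simp only [h1, h2]
  -- counting
  have hNι : Fintype.card ι = n.choose 2 := Sym2.card_subtype_not_diag
  have hN2 : 2 ≤ Fintype.card ι := by
    rw [hNι]
    calc 2 ≤ Nat.choose 3 2 := by norm_num
    _ ≤ n.choose 2 := Nat.choose_le_choose 2 hn
  have hk : ((univ : Finset ι).filter fun p => c ∈ (p.1 : Sym2 V)).card = n - 1 := by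
    have h1 : n - 1 = ((univ : Finset V).erase c).card := by
      rw [Finset.card_erase_of_mem (Finset.mem_univ c), Finset.card_univ]
    rw [h1]
    symm
    refine Finset.card_bij'
      (fun a ha => (⟨s(c, a), by
        rw [Sym2.mk_isDiag_iff]
        exact fun h => (Finset.mem_erase.1 ha).1 h.symm⟩ : ι))
      (fun p hp => Sym2.Mem.other' ((Finset.mem_filter.1 hp).2 : c ∈ (p.1 : Sym2 V)))
      ?_ ?_ ?_ ?_
    · intro a ha
      simp [Finset.mem_filter]
    · intro p hp
      rw [Finset.mem_erase]
      refine ⟨?_, Finset.mem_univ _⟩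
      intro h
      have h' : Sym2.Mem.other' ((Finset.mem_filter.1 hp).2 : c ∈ (p.1 : Sym2 V)) = c := h
      apply p.2
      have hsp := Sym2.other_spec' ((Finset.mem_filter.1 hp).2 : c ∈ (p.1 : Sym2 V))
      rw [h'] at hsp
      rw [← hsp, Sym2.mk_isDiag_iff]
    · intro a ha
      have key : ∀ (h : c ∈ (s(c, a) : Sym2 V)), Sym2.Mem.other' h = a := by
        intro h
        have h2 := Sym2.other_spec' h
        rw [Sym2.eq_iff] at h2
        rcases h2 with ⟨-, h2⟩ | ⟨h2, -⟩
        · exact h2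
        · exact absurd h2.symm (Finset.mem_erase.1 ha).1
      exact key _
    · intro p hp
      exact Subtype.ext (Sym2.other_spec' _)
  -- sums
  have hsum : ∀ (f g : ℝ), ∑ p : ι, (if c ∈ (p.1 : Sym2 V) then f else g)
      = ((n - 1 : ℕ) : ℝ) * f + ((n.choose 2 - (n - 1) : ℕ) : ℝ) * g := by
    intro f g
    rw [Finset.sum_ite, Finset.sum_const, Finset.sum_const, hk]
    have hcompl := Finset.card_filter_add_card_filter_not
      (s := (univ : Finset ι)) (p := fun p => c ∈ (p.1 : Sym2 V))
    rw [Finset.card_univ, hNι, hk] at hcompl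
    have : ((univ : Finset ι).filter fun p => ¬ c ∈ (p.1 : Sym2 V)).card
        = n.choose 2 - (n - 1) := by omega
    rw [this, nsmul_eq_mul, nsmul_eq_mul]
  have hkle : n - 1 ≤ n.choose 2 := by
    rw [Nat.choose_two_right, Nat.le_div_iff_mul_le (by norm_num)]
    calc (n - 1) * 2 ≤ (n - 1) * n := Nat.mul_le_mul_left _ (by omega)
    _ = n * (n - 1) := Nat.mul_comm _ _
  have hkR : ((n - 1 : ℕ) : ℝ) = r - 1 := by
    rw [Nat.cast_sub (by omega), Nat.cast_one]
  have hNR : ((n.choose 2 : ℕ) : ℝ) = r * (r - 1) / 2 := Nat.cast_choose_two ℝ n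
  have hNkR : ((n.choose 2 - (n - 1) : ℕ) : ℝ) = r * (r - 1) / 2 - (r - 1) := by
    rw [Nat.cast_sub hkle, hNR, hkR]
  have hS1 : ∑ p : ι, u p = (r - 1) ^ 2 := by
    simp only [hu_def]
    rw [hsum 1 2, hkR, hNkR]
    ring
  have hS2 : ∑ p : ι, (u p) ^ 2 = 2 * r * (r - 1) - 3 * (r - 1) := by
    have h4 : ∀ p : ι, (u p) ^ 2 = if c ∈ (p.1 : Sym2 V) then (1 : ℝ) else 4 := by
      intro p
      simp only [hu_def]
      split_ifs <;> norm_num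
    rw [Finset.sum_congr rfl (fun p _ => h4 p), hsum 1 4, hkR, hNkR]
    ring
  have hcardι : ((Fintype.card ι : ℕ) : ℝ) = r * (r - 1) / 2 := by
    rw [hNι]; exact hNR
  -- trace
  have htrace : (max4MatrixR G).trace = 2 * (r - 1) ^ 2 := by
    rw [hMat]
    rw [Matrix.trace]
    simp only [Matrix.diag, Matrix.of_apply]
    rw [show ∑ p : ι, (u p + u p) = 2 * ∑ p : ι, u p by
      rw [Finset.sum_add_distrib]; ring]
    rw [hS1]
  -- eigenvalues
  set Sv : ℝ := (r - 1) ^ 2 with hSv_def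
  set Pv : ℝ := -((r - 1) * ((r - 1) * (r - 2) / 2)) with hPv_def
  have hPneg : Pv < 0 := by
    rw [hPv_def]
    nlinarith [hr3]
  have hD : 0 ≤ Sv ^ 2 - Pv := by nlinarith [sq_nonneg Sv]
  set lam : ℝ := Sv + Real.sqrt (Sv ^ 2 - Pv) with hlam_def
  set mu : ℝ := Sv - Real.sqrt (Sv ^ 2 - Pv) with hmu_def
  have hsumlm : lam + mu = 2 * Sv := by rw [hlam_def, hmu_def]; ring
  have hprod : lam * mu = Pv := by
    have hs := Real.sq_sqrt hD
    calc lam * mu = Sv ^ 2 - (Real.sqrt (Sv ^ 2 - Pv)) ^ 2 := by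
          rw [hlam_def, hmu_def]; ring
    _ = Pv := by rw [hs]; ring
  have hlam0 : lam ≠ 0 := by
    intro h
    rw [h, zero_mul] at hprod
    exact hPneg.ne hprod.symm
  have hmu0 : mu ≠ 0 := by
    intro h
    rw [h, mul_zero] at hprod
    exact hPneg.ne hprod.symm
  -- characteristic polynomial
  set K := Fintype.card ι - 2 with hK_def
  set Q : Polynomial ℝ := Polynomial.X ^ K * ((Polynomial.X - Polynomial.C lam) *
    (Polynomial.X - Polynomial.C mu)) with hQ_def
  have hcp : (max4MatrixR G).charpoly = Q := by
    have hfun : ∀ t : ℝ, t ≠ 0 →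
        Polynomial.eval t ((max4MatrixR G).charpoly - Q) = 0 := by
      intro t ht
      rw [Polynomial.eval_sub, aux_eval_charpoly, hMat,
        aux_det_rank_two u hN2 t ht, hS1, hS2, hcardι]
      simp only [hQ_def, Polynomial.eval_mul, Polynomial.eval_pow, Polynomial.eval_sub,
        Polynomial.eval_X, Polynomial.eval_C]
      rw [show (t - lam) * (t - mu) = t ^ 2 - (lam + mu) * t + lam * mu by ring,
        hsumlm, hprod]
      rw [show ((r-1)^2) ^ 2 - r * (r - 1) / 2 * (2 * r * (r - 1) - 3 * (r - 1)) =
        Pv by rw [hPv_def]; ring]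
      rw [hK_def, hSv_def]
      ring
    have hsub : (max4MatrixR G).charpoly - Q = 0 := by
      apply Polynomial.eq_zero_of_infinite_isRoot
      apply Set.Infinite.mono (s := ({(0:ℝ)}ᶜ : Set ℝ))
      · intro t ht
        exact hfun t (by simpa using ht)
      · exact (Set.finite_singleton (0:ℝ)).infinite_compl
    exact sub_eq_zero.1 hsub
  have hQroots : Q.roots = Multiset.replicate K 0 + ({lam} + {mu}) := by
    rw [hQ_def]
    rw [Polynomial.roots_mul (mul_ne_zero (pow_ne_zero _ Polynomial.X_ne_zero)
      (mul_ne_zero (Polynomial.X_sub_C_ne_zero lam) (Polynomial.X_sub_C_ne_zero mu)))]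
    rw [Polynomial.roots_pow, Polynomial.roots_X,
      Polynomial.roots_mul (mul_ne_zero (Polynomial.X_sub_C_ne_zero lam)
        (Polynomial.X_sub_C_ne_zero mu)),
      Polynomial.roots_X_sub_C, Polynomial.roots_X_sub_C, Multiset.nsmul_singleton]
  refine ⟨htrace, lam, mu, ?_, ?_, ?_⟩
  · rw [hcp, hQroots]
    rw [Multiset.filter_add, Multiset.filter_add]
    rw [Multiset.filter_singleton, Multiset.filter_singleton, if_pos hlam0, if_pos hmu0]
    rw [show Multiset.filter (fun x => x ≠ 0) (Multiset.replicate K (0:ℝ)) = 0 from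
      Multiset.filter_eq_nil.2 fun a ha => by
        simp [Multiset.eq_of_mem_replicate ha]]
    simp [Multiset.insert_eq_cons, Multiset.singleton_add]
  · rw [hsumlm, hSv_def]
  · rw [hprod, hPv_def]
    have hchoose : (((n - 1).choose 2 : ℕ) : ℝ) = (r - 1) * (r - 2) / 2 := by
      rw [Nat.cast_choose_two, hkR]
      ring
    rw [hchoose]
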